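/- For all x > 0, the quantity C(x) = −2x² cosh x + x sinh x + cosh x · sinh²x is strictly positive. -/

import Mathlib

/-!
Write `s = sinh x`, `c = cosh x`, so the quantity is `c (s² - 2x²) + x s`. If `s² ≥ 2x²` both terms
are nonnegative and the second is positive. Otherwise the negative first term is controlled by the
Padé bound `tanh x < 3x / (3 + x²)`: multiplying by `3x` gives
`3x C(x) > s ((3 + x²) s² - 3x² - 2x⁴)`, which is positive by the Taylor bound `s > x + x³/6`.
The elementary inequalities all follow from "vanishes at `0`, increasing on `[0, ∞)`".
-/

open Real Set

lemma pos_of_hasDerivAt_of_pos {f f' : ℝ → ℝ} (hf : ∀ y, HasDerivAt f (f' y) y) (hf₀ : f 0 = 0)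
    (hf' : ∀ y, 0 < y → 0 < f' y) {x : ℝ} (hx : 0 < x) : 0 < f x := by
  have hmono : StrictMonoOn f (Ici 0) :=
    strictMonoOn_of_hasDerivWithinAt_pos (convex_Ici 0)
      (fun y _ ↦ (hf y).continuousAt.continuousWithinAt)
      (fun y _ ↦ (hf y).hasDerivWithinAt) (by simpa using hf')
  simpa [hf₀] using hmono self_mem_Ici hx.le hx

namespace Real

variable {x : ℝ}

lemma one_add_sq_div_two_lt_cosh (hx : 0 < x) : 1 + x ^ 2 / 2 < cosh x := by
  have := pos_of_hasDerivAt_of_pos (f := fun y ↦ cosh y - 1 - y ^ 2 / 2)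
    (fun y ↦ ((hasDerivAt_cosh y).sub_const 1).sub ((hasDerivAt_pow 2 y).div_const 2))
    (by simp) (fun y hy ↦ by simpa using self_lt_sinh_iff.2 hy) hx
  linarith

lemma add_pow_three_div_six_lt_sinh (hx : 0 < x) : x + x ^ 3 / 6 < sinh x := by
  have := pos_of_hasDerivAt_of_pos (f := fun y ↦ sinh y - y - y ^ 3 / 6)
    (fun y ↦ ((hasDerivAt_sinh y).sub (hasDerivAt_id y)).sub ((hasDerivAt_pow 3 y).div_const 6))
    (by simp) (fun y hy ↦ by have := one_add_sq_div_two_lt_cosh hy; norm_num; linarith) hx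
  linarith

lemma sinh_lt_mul_cosh (hx : 0 < x) : sinh x < x * cosh x := by
  have := pos_of_hasDerivAt_of_pos (f := fun y ↦ y * cosh y - sinh y)
    (fun y ↦ ((hasDerivAt_id y).mul (hasDerivAt_cosh y)).sub (hasDerivAt_sinh y))
    (by simp) (fun y hy ↦ by simpa using mul_pos hy (sinh_pos_iff.2 hy)) hx
  linarith

/-- The `[1/2]` Padé bound `tanh x < 3x / (3 + x²)`, with denominators cleared. -/
lemma three_mul_mul_cosh_lt_three_add_sq_mul_sinh (hx : 0 < x) :
    3 * x * cosh x < (3 + x ^ 2) * sinh x := by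
  have := pos_of_hasDerivAt_of_pos (f := fun y ↦ (3 + y ^ 2) * sinh y - 3 * y * cosh y)
    (fun y ↦ (((hasDerivAt_pow 2 y).const_add 3).mul (hasDerivAt_sinh y)).sub
      (((hasDerivAt_id y).const_mul 3).mul (hasDerivAt_cosh y)))
    (by simp)
    (fun y hy ↦ by
      have := mul_pos hy (sub_pos.2 (sinh_lt_mul_cosh hy))
      norm_num
      linarith) hx
  linarith

end Real

theorem stmt_7 (x : ℝ) (hx : 0 < x) :
    0 < -2 * x ^ 2 * Real.cosh x + x * Real.sinh x + Real.cosh x * Real.sinh x ^ 2 := by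
  have hs : 0 < sinh x := sinh_pos_iff.2 hx
  have hxs : 0 < x * sinh x := mul_pos hx hs
  rcases le_or_gt (2 * x ^ 2) (sinh x ^ 2) with hlarge | hsmall
  · nlinarith [mul_nonneg (cosh_pos x).le (sub_nonneg.2 hlarge)]
  have hpade := three_mul_mul_cosh_lt_three_add_sq_mul_sinh hx
  have htaylor : 3 * x ^ 2 + 2 * x ^ 4 < (3 + x ^ 2) * sinh x ^ 2 := by
    have hsq : (x + x ^ 3 / 6) ^ 2 < sinh x ^ 2 :=
      pow_lt_pow_left₀ (add_pow_three_div_six_lt_sinh hx) (by positivity) two_ne_zero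
    nlinarith [pow_pos hx 6]
  have hbound : sinh x * ((3 + x ^ 2) * sinh x ^ 2 - 3 * x ^ 2 - 2 * x ^ 4) <
      3 * x * (-2 * x ^ 2 * cosh x + x * sinh x + cosh x * sinh x ^ 2) := by
    nlinarith [mul_lt_mul_of_pos_right hpade (sub_pos.2 hsmall)]
  exact pos_of_mul_pos_right ((mul_pos hs (sub_pos.2 (by linarith))).trans hbound)
    (by positivity)
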